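/- arXiv:1907.00256 — 3 statements merged into one kernel-verified Lean document; each statement's English description precedes it below -/
import Mathlib

section
/- Let $T>0$, $m\ge 1$, $a,b>0$, and let $f:[0,T)\to[0,\infty)$ be locally essentially bounded (not necessarily continuous) and satisfy $f(t) \le a + b\int_0^t (f(s)+f(s)^m)\,ds$ for all $0<t<T$. Define $T_1>0$ by $b\,T_1\,((2a)+(2a)^m)=\tfrac{3}{4}a$. Then $f(t)\le 2a$ for all $t\in(0,\min(T,T_1))$. -/
/-!
Fix `t < min T T1` and let `K ≥ 2a` bound `f` a.e. on `[0, t]`. If `f ≤ 2a` on `(0, u]` with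
`u ≤ t`, then for `r ∈ (u, t]` the integral inequality gives
`f r ≤ a + b u ((2a) + (2a)^m) + b (r - u) (K + K^m) ≤ a + 3a/4 + b (r - u) (K + K^m)`,
which is at most `2a` once `r - u ≤ δ := a / (4 b (K + K^m))`. Hence the bound `f ≤ 2a`
propagates from `(0, u]` to `(0, u + δ]`, and in finitely many steps to `(0, t]`.
-/

open MeasureTheory Set

lemma forall_pos_of_forall_Ioc_step {Q : ℝ → Prop} {δ : ℝ} (hδ : 0 < δ)
    (step : ∀ u, 0 ≤ u → (∀ r ∈ Ioc 0 u, Q r) → ∀ r ∈ Ioc u (u + δ), Q r)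
    (r : ℝ) (hr : 0 < r) : Q r := by
  have upto : ∀ n : ℕ, ∀ r ∈ Ioc 0 (n * δ), Q r := by
    intro n
    induction n with
    | zero => simp
    | succ n ih =>
      intro r hr
      rcases le_or_gt r (n * δ) with hle | hlt
      · exact ih r ⟨hr.1, hle⟩
      · exact step (n * δ) (by positivity) ih r ⟨hlt, by simpa [add_mul] using hr.2⟩
  obtain ⟨n, hn⟩ := exists_nat_ge (r / δ)
  exact upto n r ⟨hr, (div_le_iff₀ hδ).1 hn⟩

lemma intervalIntegral_le_mul_of_ae_le {g : ℝ → ℝ} {a b C : ℝ} (hab : a ≤ b)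
    (hg : IntervalIntegrable g volume a b) (h : ∀ᵐ x, x ∈ Ioc a b → g x ≤ C) :
    ∫ x in a..b, g x ≤ (b - a) * C :=
  calc ∫ x in a..b, g x ≤ ∫ _ in a..b, C := by
        rw [intervalIntegral.integral_of_le hab, intervalIntegral.integral_of_le hab]
        exact setIntegral_mono_ae_restrict hg.1 intervalIntegrable_const.1
          ((ae_restrict_iff' measurableSet_Ioc).2 h)
    _ = (b - a) * C := by simp

/-- Without integrability the integral is the junk value `0`, so the bound still holds. -/
lemma intervalIntegral_le_of_ae_le_of_ae_le {g : ℝ → ℝ} {a u b C₁ C₂ : ℝ}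
    (hau : a ≤ u) (hub : u ≤ b) (hC₁ : 0 ≤ C₁) (hC₂ : 0 ≤ C₂)
    (h₁ : ∀ᵐ x, x ∈ Ioc a u → g x ≤ C₁) (h₂ : ∀ᵐ x, x ∈ Ioc u b → g x ≤ C₂) :
    ∫ x in a..b, g x ≤ (u - a) * C₁ + (b - u) * C₂ := by
  by_cases hg : IntervalIntegrable g volume a b
  · have hu : u ∈ uIcc a b := uIcc_of_le (hau.trans hub) ▸ ⟨hau, hub⟩
    have hg₁ := hg.mono_set (uIcc_subset_uIcc_left hu)
    have hg₂ := hg.mono_set (uIcc_subset_uIcc_right hu)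
    rw [← intervalIntegral.integral_add_adjacent_intervals hg₁ hg₂]
    exact add_le_add (intervalIntegral_le_mul_of_ae_le hau hg₁ h₁)
      (intervalIntegral_le_mul_of_ae_le hub hg₂ h₂)
  · rw [intervalIntegral.integral_undef hg]
    have : 0 ≤ u - a := sub_nonneg.2 hau
    have : 0 ≤ b - u := sub_nonneg.2 hub
    positivity

lemma add_rpow_le_add_rpow {x y m : ℝ} (hx : 0 ≤ x) (hxy : x ≤ y) (hm : 0 ≤ m) :
    x + x ^ m ≤ y + y ^ m :=
  add_le_add hxy (Real.rpow_le_rpow hx hxy hm)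

lemma intervalIntegral_add_rpow_le {f : ℝ → ℝ} {m a u b A K : ℝ} (hm : 0 ≤ m)
    (hau : a ≤ u) (hub : u ≤ b) (hA : 0 ≤ A) (hK : 0 ≤ K) (hf : ∀ x ∈ Ioc a b, 0 ≤ f x)
    (h₁ : ∀ x ∈ Ioc a u, f x ≤ A) (h₂ : ∀ᵐ x, x ∈ Ioc u b → f x ≤ K) :
    ∫ x in a..b, (f x + f x ^ m) ≤ (u - a) * (A + A ^ m) + (b - u) * (K + K ^ m) :=
  intervalIntegral_le_of_ae_le_of_ae_le hau hub (by positivity) (by positivity)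
    (ae_of_all _ fun x hx ↦
      add_rpow_le_add_rpow (hf x (Ioc_subset_Ioc_right hub hx)) (h₁ x hx) hm)
    (h₂.mono fun x hx hxb ↦
      add_rpow_le_add_rpow (hf x (Ioc_subset_Ioc_left hau hxb)) (hx hxb) hm)

theorem gronwall_discontinuous_general (T m a b T1 : ℝ) (hm : 1 ≤ m)
    (ha : 0 < a) (hb : 0 < b)
    (f : ℝ → ℝ)
    (hf_nonneg : ∀ t ∈ Set.Ico (0:ℝ) T, 0 ≤ f t)
    (hf_locbdd : ∀ t ∈ Set.Ico (0:ℝ) T, ∃ M : ℝ, ∀ᵐ s ∂volume,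
        s ∈ Set.Icc (0:ℝ) t → f s ≤ M)
    (hf_ineq : ∀ t : ℝ, 0 < t → t < T →
        f t ≤ a + b * ∫ s in (0:ℝ)..t, (f s + f s ^ m))
    (hT1 : b * T1 * ((2*a) + (2*a) ^ m) = 3/4 * a) :
    ∀ t : ℝ, 0 < t → t < min T T1 → f t ≤ 2 * a := by
  intro t ht htmin
  obtain ⟨htT, htT1⟩ := lt_min_iff.1 htmin
  obtain ⟨M, hM⟩ := hf_locbdd t ⟨ht.le, htT⟩
  set K := max M (2 * a)
  have hK : 0 < K := lt_max_of_lt_right (by positivity)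
  have hf_le_K : ∀ᵐ r, r ∈ Ioc 0 t → f r ≤ K :=
    hM.mono fun r hr hrt ↦ (hr (Ioc_subset_Icc_self hrt)).trans (le_max_left _ _)
  set C₁ := 2 * a + (2 * a) ^ m
  set C₂ := K + K ^ m
  have hC₂ : 0 < C₂ := by positivity
  set δ := a / (4 * b * C₂)
  have hδ : 0 < δ := by positivity
  refine forall_pos_of_forall_Ioc_step (Q := fun r ↦ r ≤ t → f r ≤ 2 * a) hδ
    (fun u hu hbelow r hr hrt ↦ ?_) t ht le_rfl
  obtain ⟨hur, hrδ⟩ := hr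
  have h_int : ∫ s in (0:ℝ)..r, (f s + f s ^ m) ≤ u * C₁ + (r - u) * C₂ := by
    simpa using intervalIntegral_add_rpow_le (by linarith) hu hur.le (by positivity) hK.le
      (fun x hx ↦ hf_nonneg x ⟨hx.1.le, by linarith [hx.2]⟩)
      (fun x hx ↦ hbelow x hx (by linarith [hx.2]))
      (hf_le_K.mono fun x hx hxr ↦ hx ⟨hu.trans_lt hxr.1, hxr.2.trans hrt⟩)
  have h₁ : b * (u * C₁) ≤ 3 / 4 * a := by
    rw [← hT1, ← mul_assoc]
    gcongr
    linarith
  have h₂ : b * ((r - u) * C₂) ≤ a / 4 :=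
    calc b * ((r - u) * C₂) ≤ b * (δ * C₂) := by gcongr; linarith
      _ = a / 4 := by simp only [δ]; field_simp
  calc f r ≤ a + b * ∫ s in (0:ℝ)..r, (f s + f s ^ m) := hf_ineq r (by linarith) (by linarith)
    _ ≤ a + b * (u * C₁ + (r - u) * C₂) := by gcongr
    _ ≤ 2 * a := by linarith [mul_add b (u * C₁) ((r - u) * C₂)]

/-- Grönwall-type lemma for possibly discontinuous, locally essentially bounded functions. -/
theorem gronwall_discontinuous (T m a b T1 : ℝ) (hT : 0 < T) (hm : 1 ≤ m)
    (ha : 0 < a) (hb : 0 < b)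
    (f : ℝ → ℝ)
    (hf_nonneg : ∀ t ∈ Set.Ico (0:ℝ) T, 0 ≤ f t)
    (hf_locbdd : ∀ t ∈ Set.Ico (0:ℝ) T, ∃ M : ℝ, ∀ᵐ s ∂volume,
        s ∈ Set.Icc (0:ℝ) t → f s ≤ M)
    (hf_ineq : ∀ t : ℝ, 0 < t → t < T →
        f t ≤ a + b * ∫ s in (0:ℝ)..t, (f s + f s ^ m))
    (hT1 : b * T1 * ((2*a) + (2*a) ^ m) = 3/4 * a) :
    ∀ t : ℝ, 0 < t → t < min T T1 → f t ≤ 2 * a :=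
  gronwall_discontinuous_general T m a b T1 hm ha hb f hf_nonneg hf_locbdd hf_ineq hT1
end

section
/- Let $\lambda>1$ and suppose $u_0:\mathbb{R}^3\to\mathbb{R}^3$ is $\lambda$-discretely self-similar, i.e., $u_0(x)=\lambda u_0(\lambda x)$ for almost every $x$. Then $u_0\in M^{2,1}(\mathbb{R}^3)$ if and only if $u_0\in L^2_{\mathrm{uloc}}(\mathbb{R}^3)$, and in that case $\|u_0\|_{L^2_{\mathrm{uloc}}} \le \|u_0\|_{M^{2,1}} \le \sqrt{\lambda}\,\|u_0\|_{L^2_{\mathrm{uloc}}}$. -/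
/-!
Discrete self-similarity makes the Morrey quotient `R⁻¹ ∫_{B_R(x₀)} |u₀|²` invariant under
`(x₀, R) ↦ (λ x₀, λ R)`: the change of variables `x ↦ λ x` contributes `λ³` and `|u₀|²` contributes
`λ⁻²`. Every radius can therefore be rescaled into `(λ⁻¹, 1]`, where the quotient is at most `λ`
times the integral over a unit ball.
-/

open MeasureTheory Set ENNReal

/-- The square of the `L²_uloc` norm on `ℝ³`. -/
noncomputable def L2ulocSq (f : EuclideanSpace ℝ (Fin 3) → EuclideanSpace ℝ (Fin 3)) : ℝ≥0∞ :=
  ⨆ x0 : EuclideanSpace ℝ (Fin 3),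
    ∫⁻ x in Metric.ball x0 1, (‖f x‖₊ : ℝ≥0∞) ^ 2

/-- The square of the Morrey `M^{2,1}` norm on `ℝ³`. -/
noncomputable def M21sq (f : EuclideanSpace ℝ (Fin 3) → EuclideanSpace ℝ (Fin 3)) : ℝ≥0∞ :=
  ⨆ x0, ⨆ R ∈ Set.Ioi (0:ℝ),
    (ENNReal.ofReal R)⁻¹ * ∫⁻ x in Metric.ball x0 R, (‖f x‖₊ : ℝ≥0∞) ^ 2

open Metric Module

theorem preimage_smul_ball_of_pos {E : Type*} [NormedAddCommGroup E] [NormedSpace ℝ E]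
    {c : ℝ} (hc : 0 < c) (x0 : E) (R : ℝ) :
    (c • ·) ⁻¹' ball (c • x0) (c * R) = ball x0 R := by
  ext x
  simp only [mem_preimage, mem_ball, dist_eq_norm, ← smul_sub, norm_smul,
    Real.norm_of_nonneg hc.le]
  exact mul_lt_mul_iff_right₀ hc

section Scaling

variable {E F : Type*} [NormedAddCommGroup E] [NormedSpace ℝ E] [FiniteDimensional ℝ E]
  [MeasurableSpace E] [BorelSpace E] (μ : Measure E) [μ.IsAddHaarMeasure]
  [NormedAddCommGroup F] [NormedSpace ℝ F]

theorem lintegral_ball_comp_smul {c : ℝ} (hc : 0 < c) (g : E → ℝ≥0∞) (x0 : E) (R : ℝ) :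
    ∫⁻ x in ball x0 R, g (c • x) ∂μ
      = ENNReal.ofReal (c ^ finrank ℝ E)⁻¹ * ∫⁻ x in ball (c • x0) (c * R), g x ∂μ := by
  have hemb : MeasurableEmbedding (c • · : E → E) :=
    (Homeomorph.smulOfNeZero c hc.ne').measurableEmbedding
  rw [← hemb.lintegral_map, ← preimage_smul_ball_of_pos hc, ← hemb.restrict_map,
    Measure.map_addHaar_smul μ hc.ne', Measure.restrict_smul, lintegral_smul_measure,
    abs_of_pos (by positivity)]
  rfl

theorem lintegral_ball_smul_of_dss {c : ℝ} (hc : 0 < c) {f : E → F}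
    (hf : ∀ᵐ x ∂μ, f x = c • f (c • x)) (x0 : E) (R : ℝ) :
    ENNReal.ofReal c ^ finrank ℝ E * ∫⁻ x in ball x0 R, (‖f x‖₊ : ℝ≥0∞) ^ 2 ∂μ
      = ENNReal.ofReal c ^ 2 * ∫⁻ x in ball (c • x0) (c * R), (‖f x‖₊ : ℝ≥0∞) ^ 2 ∂μ := by
  have hsq : ∀ᵐ x ∂μ.restrict (ball x0 R),
      (‖f x‖₊ : ℝ≥0∞) ^ 2 = ENNReal.ofReal c ^ 2 * (‖f (c • x)‖₊ : ℝ≥0∞) ^ 2 := by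
    refine ae_restrict_of_ae (hf.mono fun x hx => ?_)
    rw [hx, nnnorm_smul, ENNReal.coe_mul, mul_pow, ← Real.enorm_eq_ofReal hc.le, enorm_eq_nnnorm]
  have hpow : ENNReal.ofReal c ^ finrank ℝ E * ENNReal.ofReal (c ^ finrank ℝ E)⁻¹ = 1 := by
    rw [← ENNReal.ofReal_pow hc.le, ← ENNReal.ofReal_mul (by positivity),
      mul_inv_cancel₀ (by positivity), ENNReal.ofReal_one]
  rw [lintegral_congr_ae hsq, lintegral_const_mul' _ _ (by simp),
    lintegral_ball_comp_smul μ hc (fun y => (‖f y‖₊ : ℝ≥0∞) ^ 2),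
    mul_left_comm, ← mul_assoc _ _ (∫⁻ _ in _, _ ∂μ), hpow, one_mul]

end Scaling

theorem eq_zpow_smul_of_eq_smul {X α : Type*} [MulAction ℝ X] {c : ℝ} (hc : c ≠ 0)
    {g : X → ℝ → α} (hg : ∀ x R, g x R = g (c • x) (c * R)) (x : X) (R : ℝ) (k : ℤ) :
    g x R = g (c ^ k • x) (c ^ k * R) := by
  induction k using Int.induction_on with
  | zero => simp
  | succ k ih => rw [ih, hg, smul_smul, ← mul_assoc, ← zpow_one_add₀ hc, add_comm]
  | pred k ih =>
    rw [ih, hg (c ^ (-(k : ℤ) - 1) • x), smul_smul, ← mul_assoc, ← zpow_one_add₀ hc]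
    ring_nf

local notation "ℝ³" => EuclideanSpace ℝ (Fin 3)

noncomputable def morreyQuotient (f : ℝ³ → ℝ³) (x0 : ℝ³) (R : ℝ) : ℝ≥0∞ :=
  (ENNReal.ofReal R)⁻¹ * ∫⁻ x in ball x0 R, (‖f x‖₊ : ℝ≥0∞) ^ 2

section SelfSimilar

variable {lam : ℝ} {u : ℝ³ → ℝ³}

theorem morreyQuotient_smul_of_dss (hlam : 0 < lam)
    (hdss : ∀ᵐ x ∂volume, u x = lam • u (lam • x)) (x0 : ℝ³) (R : ℝ) :
    morreyQuotient u x0 R = morreyQuotient u (lam • x0) (lam * R) := by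
  have hscale := lintegral_ball_smul_of_dss volume hlam hdss x0 R
  rw [finrank_euclideanSpace_fin, pow_succ, mul_assoc] at hscale
  have hlam₀ : ENNReal.ofReal lam ≠ 0 := by simpa using hlam
  have hball : ∫⁻ x in ball (lam • x0) (lam * R), (‖u x‖₊ : ℝ≥0∞) ^ 2
      = ENNReal.ofReal lam * ∫⁻ x in ball x0 R, (‖u x‖₊ : ℝ≥0∞) ^ 2 :=
    ((ENNReal.mul_right_inj (pow_ne_zero 2 hlam₀) (by simp)).1 hscale).symm
  rw [morreyQuotient, morreyQuotient, hball, ENNReal.ofReal_mul hlam.le,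
    ENNReal.mul_inv (.inl hlam₀) (.inl ofReal_ne_top), mul_mul_mul_comm,
    ENNReal.inv_mul_cancel hlam₀ ofReal_ne_top, one_mul]

theorem morreyQuotient_zpow_smul_of_dss (hlam : 0 < lam)
    (hdss : ∀ᵐ x ∂volume, u x = lam • u (lam • x)) (x0 : ℝ³) (R : ℝ) (k : ℤ) :
    morreyQuotient u x0 R = morreyQuotient u (lam ^ k • x0) (lam ^ k * R) :=
  eq_zpow_smul_of_eq_smul hlam.ne' (morreyQuotient_smul_of_dss hlam hdss) x0 R k

end SelfSimilar

theorem morreyQuotient_le_of_mem_Ioc {lam s : ℝ} (hlam : 0 < lam) (hs : s ∈ Ioc lam⁻¹ 1)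
    (u : ℝ³ → ℝ³) (y : ℝ³) : morreyQuotient u y s ≤ ENNReal.ofReal lam * L2ulocSq u := by
  have hinv : (ENNReal.ofReal s)⁻¹ ≤ ENNReal.ofReal lam := by
    rw [← inv_inv lam, ENNReal.ofReal_inv_of_pos (inv_pos.2 hlam)]
    exact ENNReal.inv_le_inv.2 (ENNReal.ofReal_le_ofReal hs.1.le)
  calc morreyQuotient u y s
      ≤ ENNReal.ofReal lam * ∫⁻ x in ball y 1, (‖u x‖₊ : ℝ≥0∞) ^ 2 :=
        mul_le_mul' hinv (lintegral_mono_set (ball_subset_ball hs.2))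
    _ ≤ ENNReal.ofReal lam * L2ulocSq u :=
        mul_le_mul_right (le_iSup (fun y => ∫⁻ x in ball y 1, (‖u x‖₊ : ℝ≥0∞) ^ 2) y) _

theorem L2ulocSq_le_M21sq (u : ℝ³ → ℝ³) : L2ulocSq u ≤ M21sq u :=
  iSup_le fun x0 => le_iSup_of_le x0 <| le_iSup₂_of_le (1 : ℝ) (mem_Ioi.2 one_pos) <| by
    simp

theorem M21sq_le_of_dss {lam : ℝ} (hlam : 1 < lam) {u : ℝ³ → ℝ³}
    (hdss : ∀ᵐ x ∂volume, u x = lam • u (lam • x)) :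
    M21sq u ≤ ENNReal.ofReal lam * L2ulocSq u := by
  have hlam₀ : 0 < lam := one_pos.trans hlam
  refine iSup_le fun x0 => iSup₂_le fun R hR => ?_
  obtain ⟨n, hlow, hup⟩ := exists_mem_Ioc_zpow hR hlam
  rw [← morreyQuotient, morreyQuotient_zpow_smul_of_dss hlam₀ hdss x0 R (-(n + 1))]
  refine morreyQuotient_le_of_mem_Ioc hlam₀ ⟨?_, ?_⟩ u _
  · calc lam⁻¹ = lam ^ (-(n + 1)) * lam ^ n := by
          rw [← zpow_add₀ hlam₀.ne', ← zpow_neg_one]; ring_nf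
      _ < lam ^ (-(n + 1)) * R := by gcongr
  · calc lam ^ (-(n + 1)) * R ≤ lam ^ (-(n + 1)) * lam ^ (n + 1) := by gcongr
      _ = 1 := by rw [← zpow_add₀ hlam₀.ne', neg_add_cancel, zpow_zero]

/-- For a `λ`-discretely self-similar `u₀` on `ℝ³`, `u₀ ∈ M^{2,1}` iff `u₀ ∈ L²_uloc`,
with `‖u₀‖_{L²_uloc} ≤ ‖u₀‖_{M^{2,1}} ≤ √λ ‖u₀‖_{L²_uloc}` (stated with squared norms). -/
theorem dss_M21_iff_L2uloc (lam : ℝ) (hlam : 1 < lam)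
    (u0 : EuclideanSpace ℝ (Fin 3) → EuclideanSpace ℝ (Fin 3))
    (hdss : ∀ᵐ x ∂volume, u0 x = lam • u0 (lam • x)) :
    (M21sq u0 < ⊤ ↔ L2ulocSq u0 < ⊤) ∧
    L2ulocSq u0 ≤ M21sq u0 ∧
    M21sq u0 ≤ ENNReal.ofReal lam * L2ulocSq u0 := by
  have hlower := L2ulocSq_le_M21sq u0
  have hupper := M21sq_le_of_dss hlam hdss
  exact ⟨⟨hlower.trans_lt, fun h => hupper.trans_lt (mul_lt_top ofReal_lt_top h)⟩,
    hlower, hupper⟩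
end

section
/- Let $\lambda>1$, $1+r<|x_0|<\lambda-r$, and let $f(x)=\sum_{k\in\mathbb{Z}}\lambda^k f_0(\lambda^k x)$ with $f_0(x)=|x-x_0|^{-1}\chi_{B_r(0)}(x-x_0)$. Then $f\notin L^{3,\infty}(B_1(0))$: indeed, setting $\sigma_l=\lambda^l/r$ and $E_{\sigma_l}=\{x\in B_1: |f(x)|>\sigma_l\}$, one has $|E_{\sigma_l}|\ge C\,l\,\lambda^{-3l}$ for all $l\in\mathbb{N}$, so $\sup_{\sigma>0}\sigma|\{x\in B_1:|f|>\sigma\}|^{1/3}\ge C\, l^{1/3}\to\infty$. -/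
open MeasureTheory Set ENNReal

/-- The bump `f₀(x) = |x-x₀|⁻¹ χ_{B_r(0)}(x-x₀)`. -/
noncomputable def bump (x0 : EuclideanSpace ℝ (Fin 3)) (r : ℝ)
    (x : EuclideanSpace ℝ (Fin 3)) : ℝ :=
  if ‖x - x0‖ < r then ‖x - x0‖⁻¹ else 0

/-- The λ-DSS function `f(x) = ∑_{k∈ℤ} λ^k f₀(λ^k x)`. -/
noncomputable def fdss (lam : ℝ) (x0 : EuclideanSpace ℝ (Fin 3)) (r : ℝ)
    (x : EuclideanSpace ℝ (Fin 3)) : ℝ :=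
  ∑' k : ℤ, lam ^ k * bump x0 r ((lam ^ k) • x)

/-! `‖λ^k x - x₀‖ < r` forces `λ^k ‖x‖ ∈ (1, λ)`, which pins down `k`; so at most one term of the
series is nonzero, and on `B(λ^{-k} x₀, r λ^{-k})` the function is exactly `|x - λ^{-k} x₀|⁻¹`.
For `1 ≤ k ≤ l` the punctured balls of radius `r λ^{-l}` around `λ^{-k} x₀` are therefore
disjoint, lie in `B₁` and carry `|f| > λ^l / r`, giving `|E_{λ^l/r}| ≥ l |B₁| r³ λ^{-3l}`. At
`σ = λ^l / r` this makes `σ |E_σ|^{1/3} ≥ (l |B₁|)^{1/3}`, which is unbounded in `l`. -/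

lemma zpow_eq_of_zpow_mul_mem_Ioo {lam a : ℝ} {j k : ℤ} (hlam : 1 < lam)
    (hj : lam ^ j * a ∈ Ioo 1 lam) (hk : lam ^ k * a ∈ Ioo 1 lam) : j = k := by
  have key : ∀ {m n : ℤ}, lam ^ m * a ∈ Ioo 1 lam → lam ^ n * a ∈ Ioo 1 lam → m ≤ n := by
    intro m n hm hn
    have hpos : ∀ i : ℤ, 0 < lam ^ i := fun i => zpow_pos (by linarith) i
    have ha : 0 < a := pos_of_mul_pos_right (hm.1.trans' one_pos) (hpos m).le
    have hlt : lam ^ m * a < lam ^ (n + 1) * a := by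
      rw [zpow_add_one₀ (by positivity)]
      nlinarith [hm.2, hn.1]
    have := (zpow_lt_zpow_iff_right₀ hlam).1 (lt_of_mul_lt_mul_right hlt ha.le)
    omega
  exact le_antisymm (key hj hk) (key hk hj)

section Scales

variable {E : Type*} [NormedAddCommGroup E] [NormedSpace ℝ E] {lam r : ℝ} {x x0 : E}

lemma norm_zpow_smul_sub (hlam : 0 < lam) (k : ℤ) (x y : E) :
    ‖lam ^ k • x - y‖ = lam ^ k * dist x (lam ^ (-k) • y) := by
  have hk : lam ^ k • (x - lam ^ (-k) • y) = lam ^ k • x - y := by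
    rw [smul_sub, smul_smul, ← zpow_add₀ hlam.ne', add_neg_cancel, zpow_zero, one_smul]
  rw [← hk, norm_smul_of_nonneg (zpow_pos hlam k).le, dist_eq_norm]

lemma zpow_mul_norm_mem_Ioo (hlam : 0 < lam) (h1 : 1 + r < ‖x0‖) (h2 : ‖x0‖ < lam - r)
    {k : ℤ} (hk : ‖lam ^ k • x - x0‖ < r) : lam ^ k * ‖x‖ ∈ Ioo 1 lam := by
  rw [← norm_smul_of_nonneg (zpow_pos hlam k).le]
  constructor
  · linarith [norm_sub_norm_le x0 (lam ^ k • x), norm_sub_rev x0 (lam ^ k • x)]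
  · linarith [norm_sub_norm_le (lam ^ k • x) x0]

lemma zpow_eq_of_norm_zpow_smul_sub_lt (hlam : 1 < lam) (h1 : 1 + r < ‖x0‖)
    (h2 : ‖x0‖ < lam - r) {j k : ℤ} (hj : ‖lam ^ j • x - x0‖ < r)
    (hk : ‖lam ^ k • x - x0‖ < r) : j = k :=
  zpow_eq_of_zpow_mul_mem_Ioo hlam (zpow_mul_norm_mem_Ioo (by linarith) h1 h2 hj)
    (zpow_mul_norm_mem_Ioo (by linarith) h1 h2 hk)

lemma mem_ball_zpow_smul_iff (hlam : 0 < lam) (k : ℤ) :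
    x ∈ Metric.ball (lam ^ (-k) • x0) (r * lam ^ (-k)) ↔ ‖lam ^ k • x - x0‖ < r := by
  rw [norm_zpow_smul_sub hlam, Metric.mem_ball, zpow_neg, ← div_eq_mul_inv,
    lt_div_iff₀ (zpow_pos hlam k), mul_comm]

open Function in
lemma pairwise_disjoint_ball_zpow_smul (hlam : 1 < lam) (h1 : 1 + r < ‖x0‖)
    (h2 : ‖x0‖ < lam - r) :
    Pairwise (Disjoint on fun k : ℤ => Metric.ball (lam ^ (-k) • x0) (r * lam ^ (-k))) := by
  intro j k hjk
  refine Set.disjoint_left.2 fun x hxj hxk => hjk ?_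
  rw [mem_ball_zpow_smul_iff (by linarith)] at hxj hxk
  exact zpow_eq_of_norm_zpow_smul_sub_lt hlam h1 h2 hxj hxk

end Scales

local notation "ℝ³" => EuclideanSpace ℝ (Fin 3)

section Superlevel

variable {lam r : ℝ} {x0 : ℝ³}

lemma fdss_eq_of_norm_zpow_smul_sub_lt (hlam : 1 < lam) (h1 : 1 + r < ‖x0‖)
    (h2 : ‖x0‖ < lam - r) {x : ℝ³} {k : ℤ} (hk : ‖lam ^ k • x - x0‖ < r) :
    fdss lam x0 r x = lam ^ k * ‖lam ^ k • x - x0‖⁻¹ := by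
  rw [fdss, tsum_eq_single k fun j hjk => ?_, bump, if_pos hk]
  rw [bump, if_neg fun hj => hjk (zpow_eq_of_norm_zpow_smul_sub_lt hlam h1 h2 hj hk), mul_zero]

lemma fdss_eq_inv_dist (hlam : 1 < lam) (h1 : 1 + r < ‖x0‖) (h2 : ‖x0‖ < lam - r)
    {x : ℝ³} {k : ℤ} (hx : x ∈ Metric.ball (lam ^ (-k) • x0) (r * lam ^ (-k))) :
    fdss lam x0 r x = (dist x (lam ^ (-k) • x0))⁻¹ := by
  have hlam0 : 0 < lam := by linarith
  rw [fdss_eq_of_norm_zpow_smul_sub_lt hlam h1 h2 ((mem_ball_zpow_smul_iff hlam0 k).1 hx),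
    norm_zpow_smul_sub hlam0, mul_inv, ← mul_assoc, mul_inv_cancel₀ (zpow_pos hlam0 k).ne',
    one_mul]

lemma ball_diff_singleton_subset_superlevel (hlam : 1 < lam) (hr : 0 < r)
    (h1 : 1 + r < ‖x0‖) (h2 : ‖x0‖ < lam - r) {k l : ℕ} (hk : 1 ≤ k) (hkl : k ≤ l) :
    Metric.ball (lam ^ (-(k:ℤ)) • x0) (r * lam ^ (-(l:ℤ))) \ {lam ^ (-(k:ℤ)) • x0} ⊆
      {x ∈ Metric.ball (0 : ℝ³) 1 | lam ^ l / r < |fdss lam x0 r x|} := by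
  rintro x ⟨hx, hxc⟩
  set c := lam ^ (-(k:ℤ)) • x0
  have hlam0 : 0 < lam := by linarith
  have hd : 0 < dist x c := dist_pos.2 hxc
  have hρ : r * lam ^ (-(l:ℤ)) ≤ r * lam ^ (-(k:ℤ)) :=
    mul_le_mul_of_nonneg_left (zpow_le_zpow_right₀ hlam.le (by omega)) hr.le
  refine ⟨?_, ?_⟩
  · have hc : ‖c‖ = lam ^ (-(k:ℤ)) * ‖x0‖ := norm_smul_of_nonneg (zpow_pos hlam0 _).le x0
    have hscale : lam ^ (-(k:ℤ)) * lam ≤ 1 := by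
      rw [← zpow_add_one₀ hlam0.ne']
      exact zpow_le_one_of_nonpos₀ hlam.le (by omega)
    rw [mem_ball_zero_iff]
    calc ‖x‖ ≤ dist x c + ‖c‖ := by simpa using dist_triangle x c 0
      _ < r * lam ^ (-(k:ℤ)) + lam ^ (-(k:ℤ)) * ‖x0‖ := by
        rw [hc]; linarith [Metric.mem_ball.1 hx]
      _ ≤ 1 := by nlinarith [zpow_pos hlam0 (-(k:ℤ))]
  · rw [fdss_eq_inv_dist hlam h1 h2 (Metric.ball_subset_ball hρ hx), abs_of_pos (inv_pos.2 hd)]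
    have hσ : lam ^ l / r = (r * lam ^ (-(l:ℤ)))⁻¹ := by
      rw [zpow_neg, zpow_natCast, mul_inv, inv_inv, div_eq_mul_inv, mul_comm]
    exact hσ ▸ inv_strictAnti₀ hd hx

lemma natCast_mul_volume_ball_le_volume_superlevel (hlam : 1 < lam) (hr : 0 < r) (h1 : 1 + r < ‖x0‖) (h2 : ‖x0‖ < lam - r) (l : ℕ) :
    l * volume (Metric.ball (0 : ℝ³) (r * lam ^ (-(l:ℤ)))) ≤
      volume {x ∈ Metric.ball (0 : ℝ³) 1 | lam ^ l / r < |fdss lam x0 r x|} := by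
  set ρ := r * lam ^ (-(l:ℤ))
  set c : ℕ → ℝ³ := fun k => lam ^ (-(k:ℤ)) • x0
  have hdisj : (↑(Finset.Icc 1 l) : Set ℕ).PairwiseDisjoint
      fun k => Metric.ball (c k) ρ \ {c k} := by
    intro j hj k hk hjk
    refine (pairwise_disjoint_ball_zpow_smul hlam h1 h2 (Int.natCast_inj.not.2 hjk)).mono ?_ ?_
    all_goals
      refine sdiff_subset.trans (Metric.ball_subset_ball ?_)
      exact mul_le_mul_of_nonneg_left (zpow_le_zpow_right₀ hlam.le (by simp_all)) hr.le
  calc l * volume (Metric.ball (0 : ℝ³) ρ)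
      = ∑ k ∈ Finset.Icc 1 l, volume (Metric.ball (c k) ρ \ {c k}) := by
        simp [measure_sdiff_null (measure_singleton _), Measure.addHaar_ball_center]
    _ = volume (⋃ k ∈ Finset.Icc 1 l, Metric.ball (c k) ρ \ {c k}) :=
        (measure_biUnion_finset hdisj fun k _ =>
          measurableSet_ball.diff (measurableSet_singleton _)).symm
    _ ≤ _ := measure_mono <| iUnion₂_subset fun k hk =>
        ball_diff_singleton_subset_superlevel hlam hr h1 h2 (Finset.mem_Icc.1 hk).1
          (Finset.mem_Icc.1 hk).2

end Superlevel

lemma volume_ball_mul_zpow {n : ℕ} (x : EuclideanSpace ℝ (Fin n)) {r lam : ℝ} (hr : 0 < r)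
    (hlam : 0 < lam) (l : ℤ) :
    volume (Metric.ball x (r * lam ^ (-l))) =
      ENNReal.ofReal ((volume (Metric.ball (0 : EuclideanSpace ℝ (Fin n)) 1)).toReal * r ^ n *
        lam ^ (-(n * l))) := by
  have hpow : (r * lam ^ (-l)) ^ n = r ^ n * lam ^ (-(n * l)) := by
    rw [mul_pow, ← zpow_natCast (lam ^ (-l)), ← zpow_mul, neg_mul, mul_comm (n : ℤ)]
  rw [Measure.addHaar_ball_of_pos volume x (by positivity), finrank_euclideanSpace_fin, hpow,
    mul_comm, mul_assoc, ENNReal.ofReal_mul ENNReal.toReal_nonneg,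
    ENNReal.ofReal_toReal measure_ball_lt_top.ne]

lemma iSup_ofReal_mul_rpow_eq_top {lam r C : ℝ} {p : ℕ} (m : ℝ → ℝ≥0∞) (hlam : 0 < lam)
    (hr : 0 < r) (hC : 0 < C) (hp : p ≠ 0)
    (hm : ∀ l : ℕ, 1 ≤ l → ENNReal.ofReal (C * l * lam ^ (-(p * (l:ℤ)))) ≤ m (lam ^ l / r)) :
    ⨆ σ ∈ Ioi (0:ℝ), ENNReal.ofReal σ * m σ ^ (1 / p : ℝ) = ⊤ := by
  refine ENNReal.eq_top_of_forall_nnreal_le fun B => ?_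
  obtain ⟨n, hn⟩ := exists_nat_gt (((B : ℝ) * r) ^ p / C)
  set l := n + 1
  set σ := lam ^ l / r
  set A := C * l * lam ^ (-(p * (l:ℤ)))
  have hσ : 0 < σ := by positivity
  have hB : (B : ℝ) ≤ σ * A ^ (1 / p : ℝ) := by
    have hA : A ^ (1 / p : ℝ) = (C * l) ^ (1 / p : ℝ) * lam ^ (-(l:ℤ)) := by
      rw [show A = C * l * (lam ^ (-(l:ℤ))) ^ p by rw [← zpow_natCast, ← zpow_mul, neg_mul,
        mul_comm (l:ℤ)], Real.mul_rpow (by positivity) (by positivity), one_div,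
        Real.pow_rpow_inv_natCast (by positivity) hp]
    have hBl : (B : ℝ) * r ≤ (C * l) ^ (1 / p : ℝ) := by
      have hpow : ((B : ℝ) * r) ^ p ≤ C * l := by
        rw [div_lt_iff₀ hC] at hn
        have : (n : ℝ) ≤ l := by simp [l]
        nlinarith
      rw [one_div, ← Real.pow_rpow_inv_natCast (by positivity : (0:ℝ) ≤ B * r) hp]
      exact Real.rpow_le_rpow (by positivity) hpow (by positivity)
    have hcancel : lam ^ l * lam ^ (-(l:ℤ)) = 1 := by
      rw [zpow_neg, zpow_natCast, mul_inv_cancel₀ (by positivity)]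
    calc (B : ℝ) ≤ (C * l) ^ (1 / p : ℝ) / r := by rwa [le_div_iff₀ hr]
      _ = σ * A ^ (1 / p : ℝ) := by
        rw [hA, div_mul_eq_mul_div, mul_left_comm, hcancel, mul_one]
  calc (B : ℝ≥0∞) = ENNReal.ofReal B := (ENNReal.ofReal_coe_nnreal).symm
    _ ≤ ENNReal.ofReal σ * ENNReal.ofReal A ^ (1 / p : ℝ) := by
      rw [ENNReal.ofReal_rpow_of_nonneg (by positivity) (by positivity), ← ENNReal.ofReal_mul hσ.le]
      exact ENNReal.ofReal_le_ofReal hB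
    _ ≤ ENNReal.ofReal σ * m σ ^ (1 / p : ℝ) := by
      gcongr
      exact hm l (by omega)
    _ ≤ _ := le_iSup₂_of_le σ hσ le_rfl

/-- The DSS example is not in `L^{3,∞}(B₁)`: for `σ_l = λ^l / r` the superlevel sets
satisfy `|E_{σ_l}| ≥ C l λ^{-3l}`, whence the weak `L³` quasinorm on `B₁` is infinite. -/
theorem dss_not_weakL3_on_ball (lam r : ℝ) (x0 : EuclideanSpace ℝ (Fin 3))
    (hlam : 1 < lam) (hr : 0 < r) (h1 : 1 + r < ‖x0‖) (h2 : ‖x0‖ < lam - r) :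
    (∃ C : ℝ, 0 < C ∧ ∀ l : ℕ, 1 ≤ l →
      ENNReal.ofReal (C * l * lam ^ (-(3 * (l:ℤ)))) ≤
        volume {x ∈ Metric.ball (0 : EuclideanSpace ℝ (Fin 3)) 1 |
          lam ^ l / r < |fdss lam x0 r x|}) ∧
    (⨆ σ ∈ Set.Ioi (0:ℝ), ENNReal.ofReal σ *
        (volume {x ∈ Metric.ball (0 : EuclideanSpace ℝ (Fin 3)) 1 |
          σ < |fdss lam x0 r x|}) ^ (1/3 : ℝ)) = ⊤ := by
  set C := (volume (Metric.ball (0 : ℝ³) 1)).toReal * r ^ 3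
  have hC : 0 < C := mul_pos (ENNReal.toReal_pos (Metric.measure_ball_pos volume 0 one_pos).ne'
    measure_ball_lt_top.ne) (pow_pos hr 3)
  have hlevel : ∀ l : ℕ, 1 ≤ l → ENNReal.ofReal (C * l * lam ^ (-(3 * (l:ℤ)))) ≤
      volume {x ∈ Metric.ball (0 : ℝ³) 1 | lam ^ l / r < |fdss lam x0 r x|} := by
    intro l _
    refine le_of_eq_of_le ?_ (natCast_mul_volume_ball_le_volume_superlevel hlam hr h1 h2 l)
    rw [volume_ball_mul_zpow 0 hr (by linarith), ← ENNReal.ofReal_natCast,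
      ← ENNReal.ofReal_mul (by positivity)]
    congr 1
    push_cast
    ring
  refine ⟨⟨C, hC, hlevel⟩, ?_⟩
  simpa only [Nat.cast_ofNat] using
    iSup_ofReal_mul_rpow_eq_top (p := 3) _ (by linarith) hr hC three_ne_zero hlevel
end
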